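/- arXiv:1504.06647 — 5 statements merged into one kernel-verified Lean document; each statement's English description precedes it below -/
import Mathlib

section
/- Let y be a prefix of a word x with |y| ≥ 2·per(x). If x has a non-shiftable occurrence at position i in a word w, then the occurrence of y at position i in w is also non-shiftable. -/
/-!
Since `|y| ≥ 2 per(x)`, every period `q ≤ per(x)` of `y` propagates along the `per(x)`-periodic
word `x`, so `per(y) = per(x)`. A shifted occurrence of `y` at `i - per(x)` would then extend,
letter by letter through the period, to an occurrence of `x` at `i - per(x)`.
-/

variable {α : Type*}

/-- The subword of `w` of length `len` starting at 0-indexed position `i`. -/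
def subword (w : List α) (i len : ℕ) : List α := (w.drop i).take len

/-- `u` occurs in `w` at 0-indexed position `i`. -/
def OccursAt (u w : List α) (i : ℕ) : Prop :=
  i + u.length ≤ w.length ∧ subword w i u.length = u

/-- `p` is a period of `w`: `w[i] = w[i+p]` whenever both positions are in range. -/
def HasPeriod (w : List α) (p : ℕ) : Prop :=
  0 < p ∧ ∀ i : ℕ, i + p < w.length → w[i]? = w[i + p]?

/-- `per w`: the length of the shortest period of `w`. -/
noncomputable def minPeriod (w : List α) : ℕ := sInf {p | HasPeriod w p}

/-- An occurrence of `x` at (0-indexed) position `i` in `w` is shiftable if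
`x` also occurs at position `i - per x`. -/
def Shiftable (x w : List α) (i : ℕ) : Prop :=
  minPeriod x ≤ i ∧ OccursAt x w (i - minPeriod x)

theorem hasPeriod_iff {w : List α} {p : ℕ} : HasPeriod w p ↔ 0 < p ∧ w.HasPeriod p := by
  rw [HasPeriod, List.hasPeriod_iff_getElem?]
  refine and_congr_right fun _ => forall_congr' fun i => ?_
  constructor <;> intro h hi <;> exact h (by omega)

theorem minPeriod_hasPeriod (w : List α) : HasPeriod w (minPeriod w) :=
  Nat.sInf_mem (s := {p | HasPeriod w p})
    ⟨w.length + 1, hasPeriod_iff.2 ⟨w.length.succ_pos, List.hasPeriod_of_length_le w _ (by omega)⟩⟩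

theorem getElem?_eq_of_isPrefix {x y : List α} (h : y <+: x) {j : ℕ} (hj : j < y.length) :
    x[j]? = y[j]? := by
  obtain ⟨t, rfl⟩ := h
  exact List.getElem?_append_left hj

theorem HasPeriod.of_isPrefix {x y : List α} {p : ℕ} (hx : HasPeriod x p) (h : y <+: x) :
    HasPeriod y p := by
  obtain ⟨hp, hx⟩ := hasPeriod_iff.1 hx
  exact hasPeriod_iff.2 ⟨hp, hx.infix h.isInfix⟩

/-- A period `q` of a prefix `y` of `x` is a period of `x` as soon as `y` covers a full period
`p` of `x` plus `q`: every position of `x` is congruent mod `p` to one in the first `p`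
letters, where `q`-periodicity is read off `y`. -/
theorem HasPeriod.of_isPrefix_of_add_le {x y : List α} {p q : ℕ} (hx : HasPeriod x p)
    (h : y <+: x) (hy : HasPeriod y q) (hlen : p + q ≤ y.length) : HasPeriod x q := by
  obtain ⟨hp, hxp⟩ := hasPeriod_iff.1 hx
  have := h.length_le
  refine ⟨hy.1, fun j hj => ?_⟩
  have hmod : j % p < p := Nat.mod_lt j hp
  calc x[j]? = x[j % p]? := (hxp.getElem?_mod p j x (by omega)).symm
    _ = y[j % p]? := getElem?_eq_of_isPrefix h (by omega)
    _ = y[j % p + q]? := hy.2 _ (by omega)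
    _ = x[j % p + q]? := (getElem?_eq_of_isPrefix h (by omega)).symm
    _ = x[(j % p + q) % p]? := (hxp.getElem?_mod p _ x (by omega)).symm
    _ = x[j + q]? := by rw [Nat.mod_add_mod, hxp.getElem?_mod p _ x hj]

theorem minPeriod_eq_of_isPrefix {x y : List α} (h : y <+: x)
    (hlen : 2 * minPeriod x ≤ y.length) : minPeriod y = minPeriod x := by
  have hx := minPeriod_hasPeriod x
  have hle : minPeriod y ≤ minPeriod x := Nat.sInf_le (hx.of_isPrefix h)
  refine le_antisymm hle (Nat.sInf_le ?_)
  exact hx.of_isPrefix_of_add_le h (minPeriod_hasPeriod y) (by omega)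

theorem occursAt_iff_getElem? {u w : List α} {i : ℕ} :
    OccursAt u w i ↔ i + u.length ≤ w.length ∧ ∀ j < u.length, w[i + j]? = u[j]? := by
  refine and_congr_right fun hlen => ⟨fun h j hj => ?_, fun h => ?_⟩
  · rw [← h, subword, List.getElem?_take_of_lt hj, List.getElem?_drop]
  · refine List.ext_getElem? fun j => ?_
    by_cases hj : j < u.length
    · rw [subword, List.getElem?_take_of_lt hj, List.getElem?_drop, h j hj]
    · have : (subword w i u.length).length ≤ j := by simp [subword]; omega
      rw [List.getElem?_eq_none this, List.getElem?_eq_none (by omega)]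

theorem OccursAt.of_isPrefix {x y w : List α} {i : ℕ} (hx : OccursAt x w i) (h : y <+: x) :
    OccursAt y w i := by
  rw [occursAt_iff_getElem?] at hx ⊢
  have := h.length_le
  exact ⟨by omega, fun j hj => by rw [hx.2 j (by omega), getElem?_eq_of_isPrefix h hj]⟩

/-- Past the prefix, the letters at `i - p` are those of the occurrence at `i`, shifted by the
period. -/
theorem OccursAt.sub_of_isPrefix {x y w : List α} {i p : ℕ} (hx : OccursAt x w i)
    (hp : HasPeriod x p) (h : y <+: x) (hpy : p ≤ y.length) (hpi : p ≤ i)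
    (hy : OccursAt y w (i - p)) : OccursAt x w (i - p) := by
  rw [occursAt_iff_getElem?] at hx hy ⊢
  refine ⟨by omega, fun j hj => ?_⟩
  by_cases hjy : j < y.length
  · rw [hy.2 j hjy, getElem?_eq_of_isPrefix h hjy]
  · calc w[i - p + j]? = w[i + (j - p)]? := by congr 1; omega
      _ = x[j - p]? := hx.2 _ (by omega)
      _ = x[j]? := by rw [hp.2 _ (by omega), Nat.sub_add_cancel (by omega)]

/-- Let `y` be a prefix of `x` with `|y| ≥ 2 · per x`. If `x` has a non-shiftable
occurrence at position `i` in `w`, then the occurrence of `y` at position `i`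
is also non-shiftable. -/
theorem statement_3 (x y w : List α) (i : ℕ)
    (hpre : y <+: x) (hlen : 2 * minPeriod x ≤ y.length)
    (hocc : OccursAt x w i) (hns : ¬ Shiftable x w i) :
    OccursAt y w i ∧ ¬ Shiftable y w i := by
  refine ⟨hocc.of_isPrefix hpre, ?_⟩
  rintro ⟨hle, hshift⟩
  rw [minPeriod_eq_of_isPrefix hpre hlen] at hle hshift
  have hp := minPeriod_hasPeriod x
  exact hns ⟨hle, hocc.sub_of_isPrefix hp hpre (by have := hp.1; omega) hle hshift⟩
end

section
/- Let ℓ ≥ 3 be an integer and let w be a word of length at least ℓ that is not highly periodic (per(w) > |w|/3). Then there exists an index i with 1 ≤ i ≤ |w| - ℓ + 1 such that w[i..i+ℓ-1] is not highly periodic (per(w[i..i+ℓ-1]) > ℓ/3), and moreover either i = 1 or w[1..i+ℓ-2] is highly periodic (per(w[1..i+ℓ-2]) ≤ ℓ/3). -/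
/-!
If the length-`ℓ` prefix of `w` is not highly periodic, take `i = 0`. Otherwise some prefix of
length `m ≥ ℓ` has a period `q ≤ ℓ/3` while the prefix of length `m + 1` has none, because `w`
itself has none. The window of length `ℓ` ending at position `m` then cannot be highly periodic:
a period `p ≤ ℓ/3` of it gives `p + q < ℓ` and `w[m-q] = w[m-p-q] = w[m-p] = w[m]`, so `q` would
remain a period of the prefix of length `m + 1`.
-/

variable {α : Type*}

lemma Nat.exists_step_of_not {P : ℕ → Prop} {a b : ℕ} (hab : a ≤ b) (ha : P a) (hb : ¬P b) :
    ∃ m, a ≤ m ∧ m < b ∧ P m ∧ ¬P (m + 1) := by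
  by_contra! hstep
  have hall : ∀ k, a + k ≤ b → P (a + k) := by
    intro k
    induction k with
    | zero => exact fun _ => ha
    | succ k ih => exact fun hk => hstep (a + k) (by omega) (by omega) (ih (by omega))
  exact hb (by simpa [Nat.add_sub_cancel' hab] using hall (b - a) (by omega))

lemma hasPeriod_length_add_one (u : List α) : HasPeriod u (u.length + 1) :=
  ⟨Nat.succ_pos _, fun _ h => absurd h (by omega)⟩

lemma hasPeriod_minPeriod (u : List α) : HasPeriod u (minPeriod u) :=
  Nat.sInf_mem (s := {p | HasPeriod u p}) ⟨u.length + 1, hasPeriod_length_add_one u⟩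

lemma minPeriod_le_of_hasPeriod {u : List α} {p : ℕ} (h : HasPeriod u p) : minPeriod u ≤ p :=
  Nat.sInf_le h

lemma minPeriod_pos (u : List α) : 0 < minPeriod u :=
  (hasPeriod_minPeriod u).1

lemma HasPeriod.getElem?_eq_of_take {w : List α} {n q a : ℕ} (h : HasPeriod (w.take n) q)
    (hn : n ≤ w.length) (ha : a + q < n) : w[a]? = w[a + q]? := by
  have := h.2 a (by simp only [List.length_take]; omega)
  rwa [List.getElem?_take_of_lt (by omega), List.getElem?_take_of_lt ha] at this

lemma HasPeriod.getElem?_eq_of_subword {w : List α} {j L p a : ℕ}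
    (h : HasPeriod (subword w j L) p) (hjL : j + L ≤ w.length) (hja : j ≤ a)
    (ha : a + p < j + L) : w[a]? = w[a + p]? := by
  have := h.2 (a - j) (by simp only [subword, List.length_take, List.length_drop]; omega)
  rwa [subword, List.getElem?_take_of_lt (by omega), List.getElem?_take_of_lt (by omega),
    List.getElem?_drop, List.getElem?_drop, Nat.add_sub_cancel' hja,
    ← Nat.add_assoc, Nat.add_sub_cancel' hja] at this

lemma HasPeriod.take_succ_of_subword {w : List α} {m L p q : ℕ} (hm : m < w.length)
    (hq : HasPeriod (w.take m) q) (hp : HasPeriod (subword w (m + 1 - L) L) p)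
    (hpq : p + q < L) (hL : L ≤ m + 1) : HasPeriod (w.take (m + 1)) q := by
  have hp0 := hp.1
  have hwin : m + 1 - L + L ≤ w.length := by omega
  obtain ⟨r, rfl⟩ : ∃ r, m = r + p + q := ⟨m - p - q, by omega⟩
  have hlast : w[r + p]? = w[r + p + q]? := calc
    w[r + p]? = w[r]? := (hp.getElem?_eq_of_subword hwin (by omega) (by omega)).symm
    _ = w[r + q]? := hq.getElem?_eq_of_take (by omega) (by omega)
    _ = w[r + p + q]? := by
      rw [hp.getElem?_eq_of_subword hwin (by omega) (by omega), Nat.add_right_comm]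
  refine ⟨hq.1, fun a ha => ?_⟩
  simp only [List.length_take] at ha
  rw [List.getElem?_take_of_lt (by omega), List.getElem?_take_of_lt (by omega)]
  rcases Nat.lt_or_ge (a + q) (r + p + q) with ha' | ha'
  · exact hq.getElem?_eq_of_take (by omega) ha'
  · rwa [show a = r + p by omega]

theorem statement_7_general (w : List α) (ℓ : ℕ)
    (hw : ℓ ≤ w.length)
    (hnp : w.length < 3 * minPeriod w) :
    ∃ i, i + ℓ ≤ w.length ∧ ℓ < 3 * minPeriod (subword w i ℓ) ∧
      (i = 0 ∨ 3 * minPeriod (w.take (i + ℓ - 1)) ≤ ℓ) := by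
  by_cases hstart : ℓ < 3 * minPeriod (subword w 0 ℓ)
  · exact ⟨0, by omega, hstart, Or.inl rfl⟩
  have hprefix : 3 * minPeriod (w.take ℓ) ≤ ℓ := by
    simpa [subword] using hstart
  have hwhole : ¬3 * minPeriod (w.take w.length) ≤ ℓ := by
    rw [List.take_length]; omega
  obtain ⟨m, hℓm, hmw, hm, hm1⟩ :=
    Nat.exists_step_of_not (P := fun n => 3 * minPeriod (w.take n) ≤ ℓ) hw hprefix hwhole
  refine ⟨m + 1 - ℓ, by omega, ?_, Or.inr (by rwa [show m + 1 - ℓ + ℓ - 1 = m by omega])⟩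
  by_contra! hwindow
  have hp := minPeriod_pos (subword w (m + 1 - ℓ) ℓ)
  have hq := minPeriod_pos (w.take m)
  have hext := (hasPeriod_minPeriod _).take_succ_of_subword hmw
    (hasPeriod_minPeriod (subword w (m + 1 - ℓ) ℓ)) (by omega) (by omega)
  exact hm1 (by have := minPeriod_le_of_hasPeriod hext; omega)

/-- Let `ℓ ≥ 3` and let `w` be a non-highly periodic word (`per w > |w|/3`) of length
at least `ℓ`. Then there is a (0-indexed) position `i` such that the length-`ℓ`
subword `w[i..i+ℓ-1]` is not highly periodic, and either `i = 0` or the prefix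
`w[0..i+ℓ-2]` is highly periodic. -/
theorem statement_7 (w : List α) (ℓ : ℕ)
    (hℓ : 3 ≤ ℓ) (hw : ℓ ≤ w.length)
    (hnp : w.length < 3 * minPeriod w) :
    ∃ i, i + ℓ ≤ w.length ∧ ℓ < 3 * minPeriod (subword w i ℓ) ∧
      (i = 0 ∨ 3 * minPeriod (w.take (i + ℓ - 1)) ≤ ℓ) :=
  statement_7_general w ℓ hw hnp
end

section
/- Suppose every block of a partition of a word w into consecutive blocks can be factorized into at most k phrases, where a phrase is a previous fragment of w or a fresh single letter. Then the greedy left-to-right factorization of each block (taking the longest previous fragment within the block at each step) produces at most k phrases per block. -/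
variable {α : Type*}

/-- The fragment of `w` of length `len` starting at 0-indexed position `i`
is a previous fragment: the corresponding word occurs earlier in `w`. -/
def PrevFrag (w : List α) (i len : ℕ) : Prop :=
  0 < len ∧ i + len ≤ w.length ∧ ∃ i' < i, OccursAt (subword w i len) w i'

/-- The letter at position `i` of `w` does not occur earlier in `w`. -/
def FreshLetter (w : List α) (i : ℕ) : Prop :=
  i < w.length ∧ ∀ i' < i, w[i']? ≠ w[i]?

/-- A phrase is a previous fragment or a single letter not occurring before. -/
def IsPhrase (w : List α) (i len : ℕ) : Prop :=
  PrevFrag w i len ∨ (len = 1 ∧ FreshLetter w i)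

/-- A factorization of the block `w[lo..hi)` into `a` consecutive phrases of `w`,
with boundaries `b 0 = lo < b 1 < ... < b a = hi`. -/
def IsBlockFactorization (w : List α) (lo hi a : ℕ) (b : ℕ → ℕ) : Prop :=
  b 0 = lo ∧ b a = hi ∧ (∀ k < a, b k < b (k + 1)) ∧
    ∀ k < a, IsPhrase w (b k) (b (k + 1) - b k)

/-- The greedy factorization of the block: each phrase is the longest phrase
starting at its position and contained in the block. -/
def IsGreedyBlockFactorization (w : List α) (lo hi a : ℕ) (b : ℕ → ℕ) : Prop :=
  IsBlockFactorization w lo hi a b ∧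
    ∀ k < a, ∀ len, b (k + 1) - b k < len → b k + len ≤ hi →
      ¬ IsPhrase w (b k) len


/-! Greedy stays ahead: by induction on `m`, the `m`-th boundary of the greedy factorization
is never to the left of the `m`-th boundary of any other factorization of the block. Indeed,
if greedy stands at `b m ≥ g m` and `b m < g (m + 1)`, then `w[b m .. g (m + 1))` is a suffix
of a phrase, hence itself a phrase inside the block, so the longest phrase chosen by greedy
reaches at least `g (m + 1)`. -/

lemma length_subword {w : List α} {i len : ℕ} (h : i + len ≤ w.length) :
    (subword w i len).length = len := by
  simp only [subword, List.length_take, List.length_drop]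
  omega

lemma drop_subword (w : List α) (i d len : ℕ) :
    (subword w i len).drop d = subword w (i + d) (len - d) := by
  simp [subword, List.drop_take, List.drop_drop]

lemma OccursAt.drop {u w : List α} {i : ℕ} (h : OccursAt u w i) {d : ℕ} (hd : d ≤ u.length) :
    OccursAt (u.drop d) w (i + d) := by
  obtain ⟨hlen, hsub⟩ := h
  refine ⟨by simp only [List.length_drop]; omega, ?_⟩
  rw [List.length_drop, ← drop_subword, hsub]

lemma IsPhrase.suffix {w : List α} {i len j : ℕ} (h : IsPhrase w i len)
    (hij : i ≤ j) (hj : j < i + len) : IsPhrase w j (i + len - j) := by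
  rcases h with ⟨-, hle, i', hi', hocc⟩ | ⟨rfl, hfresh⟩
  · have hsuffix : subword w j (i + len - j) = (subword w i len).drop (j - i) := by
      rw [drop_subword]
      congr 1 <;> omega
    refine .inl ⟨by omega, by omega, i' + (j - i), by omega, ?_⟩
    rw [hsuffix]
    exact hocc.drop (by rw [length_subword hle]; omega)
  · obtain rfl : j = i := by omega
    exact .inr ⟨by omega, hfresh⟩

namespace IsBlockFactorization

variable {w : List α} {lo hi a : ℕ} {b : ℕ → ℕ}

lemma strictMonoOn (h : IsBlockFactorization w lo hi a b) : StrictMonoOn b (Set.Iic a) :=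
  strictMonoOn_Iic_of_lt_succ h.2.2.1

lemma le_hi (h : IsBlockFactorization w lo hi a b) {j : ℕ} (hj : j ≤ a) : b j ≤ hi :=
  h.2.1 ▸ h.strictMonoOn.monotoneOn (Set.mem_Iic.2 hj) Set.self_mem_Iic hj

lemma le_greedy {a' : ℕ} {g : ℕ → ℕ} (hg : IsBlockFactorization w lo hi a' g)
    (hb : IsGreedyBlockFactorization w lo hi a b) {m : ℕ} (hma' : m ≤ a') (hma : m ≤ a) :
    g m ≤ b m := by
  obtain ⟨⟨hb0, -, hbmono, -⟩, hlongest⟩ := hb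
  induction m with
  | zero => rw [hg.1, hb0]
  | succ n ih =>
    have hgn : g n ≤ b n := ih (by omega) (by omega)
    by_contra! hbehind
    have hbn := hbmono n (by omega)
    have hgn_lt := hg.2.2.1 n (by omega)
    have hphrase : IsPhrase w (b n) (g (n + 1) - b n) := by
      have := (hg.2.2.2 n (by omega)).suffix hgn (by omega)
      rwa [show g n + (g (n + 1) - g n) - b n = g (n + 1) - b n by omega] at this
    exact hlongest n (by omega) _ (by omega) (by have := hg.le_hi hma'; omega) hphrase

end IsBlockFactorization

lemma IsGreedyBlockFactorization.length_le {w : List α} {lo hi a a' : ℕ} {b g : ℕ → ℕ}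
    (hb : IsGreedyBlockFactorization w lo hi a b) (hg : IsBlockFactorization w lo hi a' g) :
    a ≤ a' := by
  by_contra! hlt
  have hstrict : b a' < b a :=
    hb.1.strictMonoOn (Set.mem_Iic.2 hlt.le) Set.self_mem_Iic hlt
  refine lt_irrefl hi ?_
  calc hi = g a' := hg.2.1.symm
    _ ≤ b a' := hg.le_greedy hb le_rfl hlt.le
    _ < b a := hstrict
    _ = hi := hb.1.2.1

/-- Optimality of greedy block factorization: if a block can be factorized into at
most `k` phrases, then the greedy factorization of the block has at most `k` phrases. -/
theorem statement_11 (w : List α) (lo hi k a a' : ℕ) (b g : ℕ → ℕ)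
    (hgreedy : IsGreedyBlockFactorization w lo hi a b)
    (hfac : IsBlockFactorization w lo hi a' g)
    (hk : a' ≤ k) :
    a ≤ k :=
  (hgreedy.length_le hfac).trans hk
end

section
/- Let w be a word and let S = {i₁ < i₂ < ... < i_r} be positions such that for each k, the fragment w[i_k..j_k] (for some j_k ≥ i_k with intervals [i_k, j_k] pairwise disjoint) is not a previous fragment of w. Then r ≤ z, the number of phrases of the LZ77 factorization of w. -/
/-!
A fragment that is not a previous fragment contains the end of some LZ77 phrase: otherwise it lies
inside one phrase and ends before it, so that phrase is not a single letter, hence a previous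
fragment, and every nonempty fragment of a previous fragment is again a previous fragment.
Fragments disjoint and listed left to right thus contain strictly increasing, hence distinct,
phrase ends, and there are only `z` of those.
-/

variable {α : Type*}

/-- `b 0 = 0 < b 1 < ... < b a = |w|` are the boundaries of a factorization of `w`
into `a` pieces; piece `k` starts at `b k` and has length `b (k+1) - b k`. -/
def IsFactorization (w : List α) (a : ℕ) (b : ℕ → ℕ) : Prop :=
  b 0 = 0 ∧ b a = w.length ∧ ∀ k < a, b k < b (k + 1)

/-- A factorization of `w` into `a` phrases. -/
def IsPhraseFactorization (w : List α) (a : ℕ) (b : ℕ → ℕ) : Prop :=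
  IsFactorization w a b ∧ ∀ k < a, IsPhrase w (b k) (b (k + 1) - b k)

/-- The LZ77 (greedy) factorization of `w` into `z` phrases: each phrase is the
longest possible phrase starting at its position. -/
def IsLZ77 (w : List α) (z : ℕ) (b : ℕ → ℕ) : Prop :=
  IsPhraseFactorization w z b ∧
    ∀ k < z, ∀ len, b (k + 1) - b k < len → b k + len ≤ w.length →
      ¬ IsPhrase w (b k) len

lemma subword_shift {w : List α} {a b d len L : ℕ}
    (h : subword w a L = subword w b L) (hd : d + len ≤ L) :
    subword w (a + d) len = subword w (b + d) len := by
  have key : ∀ x, subword w (x + d) len = ((subword w x L).drop d).take len := by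
    intro x
    rw [subword, subword, List.drop_take, List.take_take, List.drop_drop]
    congr 1
    omega
  rw [key a, key b, h]

lemma PrevFrag.mono {w : List α} {i L j len : ℕ} (h : PrevFrag w i L) (hij : i ≤ j)
    (hlen : 0 < len) (hjL : j + len ≤ i + L) : PrevFrag w j len := by
  obtain ⟨-, hiL, i', hi', hocc, hsub⟩ := h
  rw [length_subword hiL] at hocc hsub
  have hshift : subword w (i' + (j - i)) len = subword w (i + (j - i)) len :=
    subword_shift hsub (by omega)
  rw [Nat.add_sub_cancel' hij] at hshift
  refine ⟨hlen, by omega, i' + (j - i), by omega, ?_, ?_⟩ <;>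
    rw [length_subword (by omega)]
  · omega
  · exact hshift

lemma exists_le_lt_succ_of_le_of_lt {β : Type*} [LinearOrder β] {b : ℕ → β} {p : β} :
    ∀ {a : ℕ}, b 0 ≤ p → p < b a → ∃ m < a, b m ≤ p ∧ p < b (m + 1)
  | 0, h0, ha => absurd ha (not_lt.2 h0)
  | a + 1, h0, ha => by
    by_cases hp : b a ≤ p
    · exact ⟨a, a.lt_succ_self, hp, ha⟩
    · obtain ⟨m, hm, hbm⟩ := exists_le_lt_succ_of_le_of_lt h0 (not_le.1 hp)
      exact ⟨m, hm.trans a.lt_succ_self, hbm⟩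

lemma IsFactorization.exists_piece_mem {w : List α} {a : ℕ} {b : ℕ → ℕ}
    (h : IsFactorization w a b) {p : ℕ} (hp : p < w.length) :
    ∃ m < a, b m ≤ p ∧ p < b (m + 1) :=
  exists_le_lt_succ_of_le_of_lt (by rw [h.1]; exact p.zero_le) (by rw [h.2.1]; exact hp)

lemma IsPhraseFactorization.exists_end_mem_of_not_prevFrag {w : List α} {a : ℕ} {b : ℕ → ℕ}
    (h : IsPhraseFactorization w a b) {i j : ℕ} (hij : i ≤ j) (hj : j < w.length)
    (hnp : ¬ PrevFrag w i (j + 1 - i)) :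
    ∃ m < a, b (m + 1) ∈ Set.Ioc i (j + 1) := by
  obtain ⟨m, hm, hbi, hib⟩ := h.1.exists_piece_mem (hij.trans_lt hj)
  refine ⟨m, hm, hib, not_lt.1 fun hjb => ?_⟩
  rcases h.2 m hm with hprev | ⟨hone, -⟩
  · exact hnp (hprev.mono hbi (by omega) (by omega))
  · omega

lemma le_of_forall_exists_mem_Ioc {x y b : ℕ → ℕ} {r z : ℕ}
    (hxy : ∀ k, k + 1 < r → y k ≤ x (k + 1))
    (hmem : ∀ k < r, ∃ m < z, b m ∈ Set.Ioc (x k) (y k)) : r ≤ z := by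
  choose! m hmz hm using hmem
  have hmono : StrictMonoOn (b ∘ m) (Set.Iio r) :=
    strictMonoOn_of_lt_add_one Set.ordConnected_Iio fun k _ _ hk1 =>
      calc b (m k) ≤ y k := (hm k (Nat.lt_of_succ_lt hk1)).2
        _ ≤ x (k + 1) := hxy k hk1
        _ < b (m (k + 1)) := (hm (k + 1) hk1).1
  have hinj : Set.InjOn m (Finset.range r) := by
    simpa [Set.Iio] using hmono.injOn.of_comp
  simpa using Finset.card_le_card_of_injOn m
    (fun k hk => Finset.mem_range.2 (hmz k (Finset.mem_range.1 hk))) hinj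

/-- If `w[I k .. J k]`, for `k < r`, are pairwise disjoint fragments of `w` (listed left
to right), none of which is a previous fragment, then `r ≤ z`, the number of phrases
of the LZ77 factorization of `w`. -/
theorem statement_14 (w : List α) (z r : ℕ) (f I J : ℕ → ℕ)
    (hlz : IsLZ77 w z f)
    (hij : ∀ k < r, I k ≤ J k ∧ J k < w.length)
    (hnp : ∀ k < r, ¬ PrevFrag w (I k) (J k + 1 - I k))
    (hdisj : ∀ k, k + 1 < r → J k < I (k + 1)) :
    r ≤ z :=
  le_of_forall_exists_mem_Ioc (x := I) (y := (J · + 1)) hdisj fun k hk =>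
    hlz.1.exists_end_mem_of_not_prevFrag (hij k hk).1 (hij k hk).2 (hnp k hk)
end

section
/- Any fragment w[i..j] of a word w that is not a previous fragment must contain the ending position of some phrase of the LZ77 factorization of w, i.e., there exists an LZ77 phrase f_k = w[a..b] with i ≤ b ≤ j. -/
variable {α : Type*}

/-! If no phrase ends in `w[i..j]`, the phrase covering position `i` ends strictly after `j`.
It then has length at least two, so it is a previous fragment rather than a fresh letter, and
`w[i..j]`, a sub-fragment of it, occurs earlier at the same offset from that phrase's source. -/

lemma subword_length_of_le {w : List α} {s L : ℕ} (h : s + L ≤ w.length) :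
    (subword w s L).length = L := by
  simp only [subword, List.length_take, List.length_drop]
  omega

lemma subword_add (w : List α) {s d m L : ℕ} (h : d + m ≤ L) :
    subword w (s + d) m = ((subword w s L).drop d).take m := by
  rw [subword, subword, List.drop_take, List.drop_drop, List.take_take]
  congr 1
  omega

lemma PrevFrag.of_le {w : List α} {s L i m : ℕ} (h : PrevFrag w s L)
    (hs : s ≤ i) (hm : 0 < m) (hi : i + m ≤ s + L) : PrevFrag w i m := by
  obtain ⟨-, hsL, i', hi's, hocc_le, hocc⟩ := h
  rw [subword_length_of_le hsL] at hocc_le hocc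
  have hsub : ∀ t, subword w (t + (i - s)) m = ((subword w t L).drop (i - s)).take m :=
    fun t ↦ subword_add w (by omega)
  have hi_eq : subword w i m = subword w (s + (i - s)) m := by congr 1; omega
  refine ⟨hm, by omega, i' + (i - s), by omega, ?_, ?_⟩ <;>
    rw [subword_length_of_le (by omega : i + m ≤ w.length)]
  · omega
  · rw [hi_eq, hsub, hsub, hocc]

lemma IsPhrase.prevFrag_of_one_lt {w : List α} {i len : ℕ} (h : IsPhrase w i len)
    (hlen : 1 < len) : PrevFrag w i len :=
  h.resolve_right fun ⟨hone, _⟩ ↦ by omega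

lemma exists_lt_and_mem_Ico (b : ℕ → ℕ) {a i : ℕ} (h0 : b 0 ≤ i) (ha : i < b a) :
    ∃ k < a, b k ≤ i ∧ i < b (k + 1) := by
  induction a with
  | zero => omega
  | succ a ih =>
    by_cases hb : b a ≤ i
    · exact ⟨a, a.lt_succ_self, hb, ha⟩
    · obtain ⟨k, hk, hki⟩ := ih (by omega)
      exact ⟨k, hk.trans a.lt_succ_self, hki⟩

/-- Any fragment `w[i..j]` that is not a previous fragment must contain the ending
position of some phrase of the LZ77 factorization of `w`. -/
theorem statement_15 (w : List α) (z i j : ℕ) (f : ℕ → ℕ)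
    (hlz : IsLZ77 w z f)
    (hij : i ≤ j) (hj : j < w.length)
    (hnp : ¬ PrevFrag w i (j + 1 - i)) :
    ∃ k < z, i ≤ f (k + 1) - 1 ∧ f (k + 1) - 1 ≤ j := by
  by_contra! hno_end
  obtain ⟨⟨⟨hf0, hfz, -⟩, hphrase⟩, -⟩ := hlz
  obtain ⟨k, hk, hki, hik⟩ := exists_lt_and_mem_Ico f (a := z) (i := i) (by omega) (by omega)
  have hjk : j + 1 < f (k + 1) := by
    have := hno_end k hk (by omega)
    omega
  have hprev := (hphrase k hk).prevFrag_of_one_lt (by omega)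
  exact hnp (hprev.of_le hki (by omega) (by omega))
end
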